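/- For all natural numbers k and d, and every group homomorphism φ : ℤ^k → GL(d,ℝ), there exist a finite-index subgroup Γ' of ℤ^k and a continuous group homomorphism φ̂ : ℝ^k → GL(d,ℝ) such that φ̂(γ) = φ(γ) for all γ ∈ Γ' (where ℤ^k is viewed inside ℝ^k via the coordinatewise inclusion). -/

import Mathlib

open NormedSpace

/-- Elements of adjoins of commuting elements commute. -/
theorem commute_of_mem_adjoin_singleton {R A : Type*} [CommSemiring R] [Semiring A] [Algebra R A]
    {a b x y : A} (hab : Commute a b) (hx : x ∈ Algebra.adjoin R {a})
    (hy : y ∈ Algebra.adjoin R {b}) : Commute x y := by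
  have base : ∀ z ∈ Algebra.adjoin R ({b} : Set A), Commute a z := by
    intro z hz
    induction hz using Algebra.adjoin_induction with
    | mem w hw => rwa [Set.mem_singleton_iff.mp hw]
    | algebraMap r => exact Algebra.commute_algebraMap_right r a
    | add u v hu hv ihu ihv => exact ihu.add_right ihv
    | mul u v hu hv ihu ihv => exact ihu.mul_right ihv
  induction hx using Algebra.adjoin_induction with
  | mem w hw => rw [Set.mem_singleton_iff.mp hw]; exact base y hy
  | algebraMap r => exact Algebra.commute_algebraMap_left r y
  | add u v hu hv ihu ihv => exact ihu.add_left ihv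
  | mul u v hu hv ihu ihv => exact ihu.mul_left ihv

variable {𝔸 : Type*} [NormedRing 𝔸] [NormedAlgebra ℂ 𝔸] [FiniteDimensional ℂ 𝔸]

/-- In a finite-dimensional commutative complex Banach algebra, every unit
is an exponential. -/
theorem exists_exp_eq_of_comm (hcomm : ∀ x y : 𝔸, Commute x y) (u : 𝔸ˣ) :
    ∃ c : 𝔸, exp c = u := by
  classical
  let +nondep : NormedAlgebra ℚ 𝔸 := .restrictScalars ℚ ℂ 𝔸
  haveI : CompleteSpace 𝔸 := FiniteDimensional.complete ℂ 𝔸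
  -- units from surjectivity of left multiplication
  have unit_of_surj : ∀ x : 𝔸, Function.Surjective (fun y => x * y) → IsUnit x := by
    intro x hs
    obtain ⟨y, hy⟩ := hs 1
    exact ⟨⟨x, y, hy, (hcomm x y).symm.trans hy⟩, rfl⟩
  have nonunit_imp : ∀ x : 𝔸, ¬ IsUnit x → ∃ v : 𝔸, v ≠ 0 ∧ x * v = 0 := by
    intro x hx
    by_contra h
    push_neg at h
    have hinj : Function.Injective (LinearMap.mulLeft ℂ x) := by
      rw [← LinearMap.ker_eq_bot, LinearMap.ker_eq_bot']
      intro v hv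
      by_contra hv0
      exact hv0 (h v hv0 hv).elim
    exact hx (unit_of_surj x ((LinearMap.injective_iff_surjective).mp hinj))
  obtain ⟨g, hg⟩ : ∃ g : 𝔸, g = (u : 𝔸) - 1 := ⟨_, rfl⟩
  -- the set of bad parameters is finite
  set f : Module.End ℂ 𝔸 := LinearMap.mulLeft ℂ g with hf
  have hfint : IsIntegral ℂ f := IsIntegral.of_finite ℂ f
  have hpne : minpoly ℂ f ≠ 0 := minpoly.ne_zero hfint
  set bad : Set ℂ := {z | ¬ IsUnit (1 + z • g)} with hbad
  have hbadsub : bad ⊆ (fun r : ℂ => -r⁻¹) '' {r | (minpoly ℂ f).IsRoot r} := by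
    intro z hz
    have hz0 : z ≠ 0 := by
      rintro rfl
      simp only [hbad, Set.mem_setOf_eq, zero_smul, add_zero] at hz
      exact hz isUnit_one
    refine ⟨-z⁻¹, ?_, by simp [inv_neg, neg_neg, inv_inv]⟩
    rw [Set.mem_setOf_eq, ← Module.End.hasEigenvalue_iff_isRoot]
    -- 1 + z • g = z • (g - (-z⁻¹) • 1)
    have key : (1 : 𝔸) + z • g = z • (g - (-z⁻¹) • 1) := by
      rw [smul_sub, smul_smul, mul_neg, mul_inv_cancel₀ hz0, neg_smul, one_smul,
        sub_neg_eq_add, add_comm]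
    have hnotunit : ¬ IsUnit (g - (-z⁻¹) • (1 : 𝔸)) := by
      intro ⟨w, hw⟩
      apply hz
      show IsUnit ((1 : 𝔸) + z • g)
      rw [key, ← hw, Algebra.smul_def]
      exact ((isUnit_iff_ne_zero.mpr hz0).map (algebraMap ℂ 𝔸)).mul w.isUnit
    obtain ⟨v, hv0, hv⟩ := nonunit_imp _ hnotunit
    refine Module.End.hasEigenvalue_of_hasEigenvector ⟨?_, hv0⟩
    rw [Module.End.mem_eigenspace_iff]
    show g * v = (-z⁻¹) • v
    have hexp : (g - (-z⁻¹) • (1:𝔸)) * v = g * v - (-z⁻¹) • v := by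
      rw [sub_mul, smul_mul_assoc, one_mul]
    rw [hexp] at hv
    exact sub_eq_zero.mp hv
  have hbadfin : bad.Finite :=
    Set.Finite.subset (Set.Finite.image _ (Polynomial.finite_setOf_isRoot hpne)) hbadsub
  -- path from 0 to 1 avoiding bad
  have hconn : IsPathConnected badᶜ :=
    Set.Countable.isPathConnected_compl_of_one_lt_rank
      (Complex.rank_real_complex ▸ Nat.one_lt_ofNat) hbadfin.countable
  have h0mem : (0 : ℂ) ∈ badᶜ := by
    simp only [Set.mem_compl_iff, hbad, Set.mem_setOf_eq, zero_smul, add_zero, not_not]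
    exact isUnit_one
  have h1mem : (1 : ℂ) ∈ badᶜ := by
    simp only [Set.mem_compl_iff, hbad, Set.mem_setOf_eq, one_smul, not_not]
    have h1 : (1 : 𝔸) + g = u := by rw [hg]; abel
    rw [h1]
    exact u.isUnit
  obtain ⟨γ, hγ⟩ := hconn.joinedIn 0 h0mem 1 h1mem
  -- the path of units
  set P : unitInterval → 𝔸 := fun t => 1 + γ t • g with hP
  have hPcont : Continuous P := by
    exact continuous_const.add (γ.continuous.smul continuous_const)
  have hPunit : ∀ t, IsUnit (P t) := fun t => not_not.mp (hγ t)
  -- the range of exp is a neighborhood of 1 and multiplicatively closed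
  set V : Set 𝔸 := Set.range (exp : 𝔸 → 𝔸) with hV
  have hVmul : ∀ x y, x ∈ V → y ∈ V → x * y ∈ V := by
    rintro _ _ ⟨c, rfl⟩ ⟨c', rfl⟩
    exact ⟨c + c', NormedSpace.exp_add_of_commute (hcomm c c')⟩
  have hVnhds : V ∈ nhds (1 : 𝔸) := by
    have hder : HasStrictFDerivAt (exp : 𝔸 → 𝔸)
        ((ContinuousLinearEquiv.refl ℂ 𝔸 : 𝔸 ≃L[ℂ] 𝔸) : 𝔸 →L[ℂ] 𝔸) 0 := by
      exact hasStrictFDerivAt_exp_zero (𝕂 := ℂ) (𝔸 := 𝔸)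
    have hmap := hder.map_nhds_eq_of_equiv
    rw [NormedSpace.exp_zero] at hmap
    rw [← hmap]
    exact Filter.range_mem_map
  -- the set of times where P is an exponential is clopen
  set T : Set unitInterval := {t | P t ∈ V} with hT
  have hTopen : IsOpen T := by
    rw [isOpen_iff_mem_nhds]
    intro t₀ ht₀
    have hcont : ContinuousAt (fun t => P t * Ring.inverse (P t₀)) t₀ :=
      (hPcont.mul continuous_const).continuousAt
    have hval : P t₀ * Ring.inverse (P t₀) = 1 := Ring.mul_inverse_cancel _ (hPunit t₀)
    have hnh : {t | P t * Ring.inverse (P t₀) ∈ V} ∈ nhds t₀ := by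
      have := hcont.preimage_mem_nhds (by rw [hval]; exact hVnhds)
      exact this
    filter_upwards [hnh] with t ht
    have : P t = (P t * Ring.inverse (P t₀)) * P t₀ := by
      rw [mul_assoc, Ring.inverse_mul_cancel _ (hPunit t₀), mul_one]
    rw [hT, Set.mem_setOf_eq, this]
    exact hVmul _ _ ht ht₀
  have hTclosed : IsClosed T := by
    rw [← isOpen_compl_iff, isOpen_iff_mem_nhds]
    intro t₀ ht₀
    have hinv : ContinuousAt (fun t => Ring.inverse (P t)) t₀ := by
      have h1 : ContinuousAt Ring.inverse (((hPunit t₀).unit : 𝔸ˣ) : 𝔸) :=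
        NormedRing.inverse_continuousAt _
      rw [IsUnit.unit_spec] at h1
      exact h1.comp hPcont.continuousAt
    have hcont : ContinuousAt (fun t => P t₀ * Ring.inverse (P t)) t₀ :=
      (continuousAt_const.mul hinv)
    have hval : P t₀ * Ring.inverse (P t₀) = 1 := Ring.mul_inverse_cancel _ (hPunit t₀)
    have hnh : {t | P t₀ * Ring.inverse (P t) ∈ V} ∈ nhds t₀ :=
      hcont.preimage_mem_nhds (by rw [hval]; exact hVnhds)
    filter_upwards [hnh] with t ht
    intro htT
    apply ht₀
    have : P t₀ = (P t₀ * Ring.inverse (P t)) * P t := by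
      rw [mul_assoc, Ring.inverse_mul_cancel _ (hPunit t), mul_one]
    rw [hT, Set.mem_setOf_eq, this]
    exact hVmul _ _ ht htT
  -- conclude by connectedness
  have h0T : (0 : unitInterval) ∈ T := by
    rw [hT, Set.mem_setOf_eq, hP]
    simp only [γ.source, zero_smul, add_zero]
    exact ⟨0, NormedSpace.exp_zero⟩
  have hTuniv : T = Set.univ := by
    rcases isClopen_iff.mp ⟨hTclosed, hTopen⟩ with h | h
    · exact absurd (h ▸ h0T) (Set.notMem_empty _)
    · exact h
  have h1T : (1 : unitInterval) ∈ T := hTuniv ▸ Set.mem_univ _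
  rw [hT, Set.mem_setOf_eq, hP] at h1T
  simp only [γ.target, one_smul] at h1T
  have h1 : (1 : 𝔸) + g = u := by rw [hg]; abel
  rw [h1] at h1T
  exact h1T

open Matrix

section Aux

set_option synthInstance.maxHeartbeats 1000000
set_option maxHeartbeats 1000000

attribute [local instance] Matrix.linftyOpSemiNormedRing Matrix.linftyOpNormedRing
  Matrix.linftyOpNormedAlgebra

theorem zk_hom_aux (k d : ℕ) (φ : (Fin k → ℤ) → GL (Fin d) ℝ)
    (hφ : ∀ m n : Fin k → ℤ, φ (m + n) = φ m * φ n) :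
    ∃ Γ' : AddSubgroup (Fin k → ℤ), Γ'.FiniteIndex ∧
      ∃ φhat : (Fin k → ℝ) → GL (Fin d) ℝ, Continuous φhat ∧
        (∀ x y : Fin k → ℝ, φhat (x + y) = φhat x * φhat y) ∧
        ∀ γ ∈ Γ', φhat (fun i => (γ i : ℝ)) = φ γ := by
  classical
  have hφ0 : φ 0 = 1 := by
    have h := hφ 0 0
    rw [add_zero] at h
    exact (mul_eq_left.mp h.symm)
  -- the complexification embedding and entrywise conjugation
  set ιm : Matrix (Fin d) (Fin d) ℝ →+* Matrix (Fin d) (Fin d) ℂ :=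
    (Complex.ofRealHom).mapMatrix with hιm
  have hιcont : Continuous ιm := continuous_id.matrix_map Complex.continuous_ofReal
  have hιinj : Function.Injective ιm := by
    intro X Y h
    ext i j
    have h2 := congrArg (fun M => M i j) h
    simp only [hιm, RingHom.mapMatrix_apply, Matrix.map_apply] at h2
    exact Complex.ofReal_injective h2
  set κ : Matrix (Fin d) (Fin d) ℂ →+* Matrix (Fin d) (Fin d) ℂ :=
    (starRingEnd ℂ).mapMatrix with hκ
  have hκcont : Continuous κ := continuous_id.matrix_map continuous_star
  have hκreal : ∀ A : Matrix (Fin d) (Fin d) ℝ, κ (ιm A) = ιm A := by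
    intro A
    ext i j
    simp [hκ, hιm, Matrix.map_apply, Complex.conj_ofReal]
  have hκκ : ∀ X, κ (κ X) = X := by
    intro X
    ext i j
    simp [hκ, Matrix.map_apply]
  -- the commuting generators
  set u : Fin k → (Matrix (Fin d) (Fin d) ℝ)ˣ := fun i => φ (Pi.single i 1) with hu
  have hucomm : ∀ i j, Commute ((u i : Matrix (Fin d) (Fin d) ℝ)) (u j) := by
    intro i j
    have h1 : φ (Pi.single i 1) * φ (Pi.single j 1) = φ (Pi.single j 1) * φ (Pi.single i 1) := by
      rw [← hφ, ← hφ, add_comm]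
    exact Commute.map (h1 : Commute (φ (Pi.single i 1)) (φ (Pi.single j 1))) (Units.coeHom _)
  set M : Fin k → Matrix (Fin d) (Fin d) ℂ := fun i => ιm (u i : Matrix (Fin d) (Fin d) ℝ) with hM
  have hMcomm : ∀ i j, Commute (M i) (M j) := fun i j => (hucomm i j).map ιm
  have hMunit : ∀ i, IsUnit (M i) := fun i => (u i).isUnit.map ιm
  set S : Fin k → Subalgebra ℂ (Matrix (Fin d) (Fin d) ℂ) :=
    fun i => Algebra.adjoin ℂ {M i} with hS
  have hself : ∀ i, M i ∈ S i := fun i => Algebra.self_mem_adjoin_singleton ℂ _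
  have hScommAll : ∀ i j, ∀ x ∈ S i, ∀ y ∈ S j, Commute x y := fun i j x hx y hy =>
    commute_of_mem_adjoin_singleton (hMcomm i j) hx hy
  have hκS : ∀ i, ∀ x ∈ S i, κ x ∈ S i := by
    intro i x hx
    induction hx using Algebra.adjoin_induction with
    | mem w hw =>
      rw [Set.mem_singleton_iff.mp hw, hM]
      rw [hκreal]
      exact hself i
    | algebraMap r =>
      have : κ ((algebraMap ℂ (Matrix (Fin d) (Fin d) ℂ)) r)
          = algebraMap ℂ _ ((starRingEnd ℂ) r) := by
        ext p q
        rw [hκ]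
        simp only [RingHom.mapMatrix_apply, Matrix.map_apply, Matrix.algebraMap_matrix_apply,
          apply_ite (starRingEnd ℂ), map_zero, Algebra.algebraMap_self_apply]
      rw [this]
      exact Subalgebra.algebraMap_mem _ _
    | add a b ha hb iha ihb => rw [_root_.map_add]; exact add_mem iha ihb
    | mul a b ha hb iha ihb => rw [_root_.map_mul]; exact mul_mem iha ihb
  -- complex logarithms
  have hC : ∀ i : Fin k, ∃ C : Matrix (Fin d) (Fin d) ℂ, C ∈ S i ∧ exp C = M i := by
    intro i
    have hcommS : ∀ x y : S i, Commute x y := fun x y =>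
      Subtype.ext (hScommAll i i x.1 x.2 y.1 y.2)
    have hinj : Function.Injective (LinearMap.mulLeft ℂ (⟨M i, hself i⟩ : S i)) := by
      intro x y hxy
      have h2 : (M i) * (x : Matrix (Fin d) (Fin d) ℂ) = (M i) * y :=
        congrArg Subtype.val hxy
      exact Subtype.ext ((hMunit i).mul_left_cancel h2)
    obtain ⟨v, hv⟩ := (LinearMap.injective_iff_surjective.mp hinj) 1
    have hv' : (⟨M i, hself i⟩ : S i) * v = 1 := hv
    set uS : (S i)ˣ := ⟨⟨M i, hself i⟩, v, hv', (hcommS v _).trans hv'⟩ with huS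
    obtain ⟨c, hc⟩ := exists_exp_eq_of_comm hcommS uS
    haveI : IsUniformAddGroup (S i) := SeminormedAddCommGroup.to_isUniformAddGroup
    haveI : ContinuousSMul ℂ (S i) := inferInstance
    haveI : T2Space (S i) := inferInstance
    haveI : CompleteSpace (S i) := FiniteDimensional.complete ℂ (S i)
    let +nondep : NormedAlgebra ℚ (S i) := .restrictScalars ℚ ℂ _
    refine ⟨(c : Matrix (Fin d) (Fin d) ℂ), c.2, ?_⟩
    calc exp (c : Matrix (Fin d) (Fin d) ℂ)
        = (S i).val uS := by
          rw [← hc]; exact (map_exp ((S i).val) continuous_subtype_val c).symm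
      _ = M i := rfl
  choose C hCmem hCexp using hC
  -- the real logarithms of the squares
  set Bc : Fin k → Matrix (Fin d) (Fin d) ℂ := fun i => C i + κ (C i) with hBc
  have hBcmem : ∀ i, Bc i ∈ S i := fun i => add_mem (hCmem i) (hκS i _ (hCmem i))
  have hexpκC : ∀ i, exp (κ (C i)) = M i := by
    intro i
    rw [← show κ (exp (C i)) = exp (κ (C i)) from map_exp κ hκcont (C i), hCexp, hM, hκreal]
  have hexpBc : ∀ i, exp (Bc i) = M i * M i := by
    intro i
    rw [hBc]
    rw [Matrix.exp_add_of_commute _ _ (hScommAll i i _ (hCmem i) _ (hκS i _ (hCmem i)))]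
    rw [hCexp, hexpκC]
  have hκBc : ∀ i, κ (Bc i) = Bc i := by
    intro i
    rw [hBc, map_add, hκκ, add_comm]
  set B : Fin k → Matrix (Fin d) (Fin d) ℝ := fun i => (Bc i).map Complex.re with hB
  have hιB : ∀ i, ιm (B i) = Bc i := by
    intro i
    ext p q
    have h2 := congrArg (fun X => X p q) (hκBc i)
    simp only [hκ, RingHom.mapMatrix_apply, Matrix.map_apply] at h2
    simp only [hιm, hB, RingHom.mapMatrix_apply, Matrix.map_apply, Complex.ofRealHom_eq_coe]
    exact Complex.conj_eq_iff_re.mp h2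
  have hBcomm : ∀ i j, Commute (B i) (B j) := by
    intro i j
    have h := hScommAll i j _ (hBcmem i) _ (hBcmem j)
    have h2 : ιm (B i * B j) = ιm (B j * B i) := by
      rw [_root_.map_mul, _root_.map_mul, hιB, hιB, h.eq]
    exact hιinj h2
  have hexpB : ∀ i, exp (B i) = (u i : Matrix (Fin d) (Fin d) ℝ) * (u i) := by
    intro i
    apply hιinj
    rw [show ιm (exp (B i)) = exp (ιm (B i)) from map_exp ιm hιcont (B i), hιB, hexpBc,
      _root_.map_mul]
  -- the one-parameter family
  set T : (Fin k → ℝ) → Matrix (Fin d) (Fin d) ℝ :=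
    fun x => ∑ i : Fin k, (x i / 2) • B i with hT
  have hTcont : Continuous T := by
    apply continuous_finset_sum
    intro i _
    exact ((continuous_apply i).div_const 2).smul continuous_const
  have hTadd : ∀ x y, T (x + y) = T x + T y := by
    intro x y
    rw [hT, ← Finset.sum_add_distrib]
    simp [add_div, add_smul]
  have hTneg : ∀ x, T (-x) = -(T x) := by
    intro x
    rw [hT, ← Finset.sum_neg_distrib]
    simp [neg_div, neg_smul]
  have hTcomm : ∀ x y, Commute (T x) (T y) := by
    intro x y
    apply Commute.sum_left
    intro i _
    apply Commute.sum_right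
    intro j _
    exact ((hBcomm i j).smul_left _).smul_right _
  have hE1 : ∀ x, exp (T x) * exp (T (-x)) = 1 := by
    intro x
    rw [← Matrix.exp_add_of_commute _ _ (hTcomm x (-x)), hTneg, add_neg_cancel,
      NormedSpace.exp_zero]
  have hE2 : ∀ x, exp (T (-x)) * exp (T x) = 1 := by
    intro x
    rw [← Matrix.exp_add_of_commute _ _ (hTcomm (-x) x), hTneg, neg_add_cancel,
      NormedSpace.exp_zero]
  set φhat : (Fin k → ℝ) → GL (Fin d) ℝ :=
    fun x => ⟨exp (T x), exp (T (-x)), hE1 x, hE2 x⟩ with hφhat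
  -- the finite index subgroup
  set ρ : (Fin k → ℤ) →+ (Fin k → ZMod 2) :=
    { toFun := fun γ i => ((γ i : ℤ) : ZMod 2)
      map_zero' := by funext i; simp
      map_add' := by intro a b; funext i; push_cast [Pi.add_apply]; ring } with hρ
  refine ⟨ρ.ker, inferInstance, φhat, ?_, ?_, ?_⟩
  · apply Units.continuous_iff.mpr
    refine ⟨NormedSpace.exp_continuous.comp hTcont, ?_⟩
    exact NormedSpace.exp_continuous.comp (hTcont.comp continuous_neg)
  · intro x y
    apply Units.ext
    show exp (T (x + y)) = exp (T x) * exp (T y)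
    rw [hTadd, Matrix.exp_add_of_commute _ _ (hTcomm x y)]
  · intro γ hγ
    have hdvd : ∀ i, (2 : ℤ) ∣ γ i := by
      intro i
      have h2 : ((γ i : ℤ) : ZMod 2) = 0 := congrFun (AddMonoidHom.mem_ker.mp hγ) i
      exact_mod_cast (ZMod.intCast_zmod_eq_zero_iff_dvd (γ i) 2).mp h2
    set gens : Set (Fin k → ℤ) := Set.range (fun i : Fin k => Pi.single i (2:ℤ)) with hgens
    have hmemcl : γ ∈ AddSubgroup.closure gens := by
      have hrepr : γ = ∑ i : Fin k, (γ i / 2) • Pi.single i (2:ℤ) := by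
        funext j
        rw [Finset.sum_apply, Finset.sum_eq_single j]
        · simp only [Pi.smul_apply, Pi.single_eq_same, smul_eq_mul]
          exact (Int.ediv_mul_cancel (hdvd j)).symm
        · intro b _ hb
          simp [Pi.single_eq_of_ne (Ne.symm hb)]
        · intro h
          exact absurd (Finset.mem_univ j) h
      rw [hrepr]
      exact AddSubgroup.sum_mem _ fun i _ =>
        AddSubgroup.zsmul_mem _ (AddSubgroup.subset_closure (show Pi.single i (2:ℤ) ∈ gens from ⟨i, rfl⟩)) _
    have claim : ∀ x ∈ AddSubgroup.closure gens,
        exp (T (fun i => (x i : ℝ))) = ((φ x : (Matrix (Fin d) (Fin d) ℝ)ˣ) :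
          Matrix (Fin d) (Fin d) ℝ) := by
      intro x hx
      induction hx using AddSubgroup.closure_induction with
      | mem w hw =>
        obtain ⟨i, rfl⟩ := hw
        beta_reduce
        set w2 : Fin k → ℤ := Pi.single i (2:ℤ) with hwdef
        have hTval : T (fun j => (w2 j : ℝ)) = B i := by
          simp only [hT]
          rw [Finset.sum_eq_single i]
          · simp [hwdef]
          · intro b _ hb
            simp [hwdef, Pi.single_eq_of_ne hb]
          · intro h
            exact absurd (Finset.mem_univ i) h
        rw [hTval, hexpB i]
        have hsingle : w2 = Pi.single i 1 + Pi.single i 1 := by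
          rw [hwdef, ← Pi.single_add]
          norm_num
        rw [hsingle, hφ]
        rfl
      | zero =>
        have hco : (fun i => (((0 : Fin k → ℤ)) i : ℝ)) = (0 : Fin k → ℝ) := by
          funext i; simp
        rw [hco]
        have hT0 : T 0 = 0 := by simp [hT]
        rw [hT0, NormedSpace.exp_zero, hφ0]
        rfl
      | add a b ha hb iha ihb =>
        have hco : (fun i => ((a + b) i : ℝ))
            = (fun i => (a i : ℝ)) + (fun i => (b i : ℝ)) := by
          funext i; push_cast [Pi.add_apply]; ring
        rw [hco, hTadd, Matrix.exp_add_of_commute _ _ (hTcomm _ _), iha, ihb, hφ]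
        rfl
      | neg a ha iha =>
        have hco : (fun i => ((-a) i : ℝ)) = -(fun i => (a i : ℝ)) := by
          funext i; simp
        rw [hco, hTneg]
        have h2 : exp (-(T (fun i => (a i : ℝ)))) * exp (T (fun i => (a i : ℝ))) = 1 := by
          rw [← Matrix.exp_add_of_commute _ _ ((hTcomm _ _).neg_left), neg_add_cancel,
            NormedSpace.exp_zero]
        have h1 : ((φ a : (Matrix (Fin d) (Fin d) ℝ)ˣ) : Matrix (Fin d) (Fin d) ℝ)
            * ((φ (-a) : (Matrix (Fin d) (Fin d) ℝ)ˣ) : Matrix (Fin d) (Fin d) ℝ) = 1 := by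
          rw [← Units.val_mul, ← hφ, add_neg_cancel, hφ0, Units.val_one]
        calc exp (-(T (fun i => (a i : ℝ))))
            = exp (-(T (fun i => (a i : ℝ)))) * (((φ a : (Matrix (Fin d) (Fin d) ℝ)ˣ) :
              Matrix (Fin d) (Fin d) ℝ) * ((φ (-a) : (Matrix (Fin d) (Fin d) ℝ)ˣ) :
              Matrix (Fin d) (Fin d) ℝ)) := by rw [h1, mul_one]
          _ = (exp (-(T (fun i => (a i : ℝ)))) * exp (T (fun i => (a i : ℝ))))
              * ((φ (-a) : (Matrix (Fin d) (Fin d) ℝ)ˣ) : Matrix (Fin d) (Fin d) ℝ) := by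
              rw [← iha, mul_assoc]
          _ = ((φ (-a) : (Matrix (Fin d) (Fin d) ℝ)ˣ) : Matrix (Fin d) (Fin d) ℝ) := by
              rw [h2, one_mul]
    exact Units.ext (claim γ hmemcl)

end Aux

/-- Every group homomorphism `φ : ℤ^k → GL(d,ℝ)` virtually extends to a
continuous homomorphism `φ̂ : ℝ^k → GL(d,ℝ)`: there are a finite-index subgroup `Γ'` of
`ℤ^k` and a continuous homomorphism `φ̂` with `φ̂(γ) = φ(γ)` for all `γ ∈ Γ'`. -/
theorem zk_hom_to_GL_virtually_extends (k d : ℕ) (φ : (Fin k → ℤ) → GL (Fin d) ℝ)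
    (hφ : ∀ m n : Fin k → ℤ, φ (m + n) = φ m * φ n) :
    ∃ Γ' : AddSubgroup (Fin k → ℤ), Γ'.FiniteIndex ∧
      ∃ φhat : (Fin k → ℝ) → GL (Fin d) ℝ, Continuous φhat ∧
        (∀ x y : Fin k → ℝ, φhat (x + y) = φhat x * φhat y) ∧
        ∀ γ ∈ Γ', φhat (fun i => (γ i : ℝ)) = φ γ := by
  exact zk_hom_aux k d φ hφ
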